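/- Let $\{F_n\}$, $\{G_n\}$, $\{H_n\}$ be sequences of functions on $\{0,\dots,n\}$ with $F_n(k)=G_n(k)+H_n(k)F_n(k-1)$ and $F_n(0)=\mu$. Define $f_n(x)=F_n(\lfloor nx\rfloor)$, $h_n(x)=n(1-H_n(\lfloor nx\rfloor))$, $g_n(x)=nG_n(\lfloor nx\rfloor)$. If $h_n\to h$ and $g_n\to g$ uniformly on every $[\varepsilon,\varepsilon']\subset(0,1)$ with $h,g$ continuous, and $f_n\to f$ uniformly on $[0,1]$ with $f$ continuous, then $f(0)=\mu$ and $f$ is differentiable on $(0,1)$ with $f'=-fh+g$. -/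

import Mathlib

open Filter Topology Set MeasureTheory

/-! Telescoping the recurrence writes `F_n(⌊nb⌋) - F_n(⌊na⌋)` as the integral over
`[(⌊na⌋+1)/n, (⌊nb⌋+1)/n]` of the step function `n G_n(⌊nx⌋) - n (1 - H_n(⌊nx⌋)) F_n(⌊nx⌋ - 1)`.
On compact subintervals of `(0, 1)` this converges uniformly to `g - h f` (the shifted
`F_n(⌊nx⌋ - 1)` still converges to `f` because `f` is uniformly continuous), so in the limit
`f b - f a = ∫_a^b (g - h f)`, and the fundamental theorem of calculus gives `f' = g - h f`. -/

section UniformConvergence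

variable {ι α R : Type*} {l : Filter ι} {s : Set α}

theorem tendstoUniformlyOn_iff_tendsto_sub_nhds_zero [SeminormedAddCommGroup R]
    {F : ι → α → R} {f : α → R} :
    TendstoUniformlyOn F f l s ↔
      Tendsto (fun q : ι × α => F q.1 q.2 - f q.2) (l ×ˢ 𝓟 s) (𝓝 0) := by
  rw [tendstoUniformlyOn_iff_tendsto, uniformity_eq_comap_nhds_zero R, tendsto_comap_iff]
  rfl

theorem TendstoUniformlyOn.mul_of_bounded [SeminormedRing R] {F G : ι → α → R} {f g : α → R}
    (hF : TendstoUniformlyOn F f l s) (hG : TendstoUniformlyOn G g l s)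
    (hf : ∃ C, ∀ x ∈ s, ‖f x‖ ≤ C) (hg : ∃ C, ∀ x ∈ s, ‖g x‖ ≤ C) :
    TendstoUniformlyOn (fun i x => F i x * G i x) (fun x => f x * g x) l s := by
  have hbdd : ∀ k : α → R, (∃ C, ∀ x ∈ s, ‖k x‖ ≤ C) →
      IsBoundedUnder (· ≤ ·) (l ×ˢ 𝓟 s) (norm ∘ fun q : ι × α => k q.2) := by
    rintro k ⟨C, hC⟩
    exact isBoundedUnder_of_eventually_le (tendsto_snd.eventually (eventually_principal.2 hC))
  rw [tendstoUniformlyOn_iff_tendsto_sub_nhds_zero] at *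
  -- `F G - f g = (F - f) (G - g) + (F - f) g + f (G - g)`
  have hsum := ((hF.mul hG).add (hF.zero_mul_isBoundedUnder_le (hbdd g hg))).add
    (isBoundedUnder_le_mul_tendsto_zero (hbdd f hf) hG)
  simp only [mul_zero, add_zero] at hsum
  convert hsum using 2
  noncomm_ring

end UniformConvergence

theorem TendstoUniformlyOn.comp_sub_of_uniformContinuousOn {ι E β : Type*} {l : Filter ι}
    [SeminormedAddCommGroup E] [PseudoMetricSpace β] {F : ι → E → β} {f : E → β} {s t : Set E}
    {δ : ι → E} (hF : TendstoUniformlyOn F f l s) (hf : UniformContinuousOn f s)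
    (hδ : Tendsto δ l (𝓝 0)) (hts : t ⊆ s) (hshift : ∀ᶠ i in l, ∀ x ∈ t, x - δ i ∈ s) :
    TendstoUniformlyOn (fun i x => F i (x - δ i)) f l t := by
  rw [Metric.tendstoUniformlyOn_iff] at hF ⊢
  intro ε hε
  obtain ⟨η, hη, hfη⟩ := Metric.uniformContinuousOn_iff.1 hf (ε / 2) (half_pos hε)
  filter_upwards [hF (ε / 2) (half_pos hε), hshift, hδ (Metric.ball_mem_nhds 0 hη)]
    with i hFi hsi hδi x hx
  calc dist (f x) (F i (x - δ i))
      ≤ dist (f x) (f (x - δ i)) + dist (f (x - δ i)) (F i (x - δ i)) := dist_triangle _ _ _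
    _ < ε / 2 + ε / 2 :=
      add_lt_add (hfη x (hts hx) _ (hsi x hx) (by simpa using hδi)) (hFi _ (hsi x hx))
    _ = ε := add_halves ε

theorem tendsto_intervalIntegral_of_tendstoUniformlyOn {ι E : Type*} [NormedAddCommGroup E]
    [NormedSpace ℝ E] [CompleteSpace E] {l : Filter ι} {ψ : ι → ℝ → E} {φ : ℝ → E}
    {p q a b : ℝ} {u v : ι → ℝ} (hψ : TendstoUniformlyOn ψ φ l (Icc p q))
    (hφ : ContinuousOn φ (Icc p q)) (ha : a ∈ Ioo p q) (hb : b ∈ Ioo p q)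
    (hu : Tendsto u l (𝓝 a)) (hv : Tendsto v l (𝓝 b))
    (hψint : ∀ᶠ i in l, IntervalIntegrable (ψ i) volume (u i) (v i)) :
    Tendsto (fun i => ∫ x in u i..v i, ψ i x) l (𝓝 (∫ x in a..b, φ x)) := by
  have hus : ∀ᶠ i in l, u i ∈ Icc p q := hu.eventually (Icc_mem_nhds ha.1 ha.2)
  have hvs : ∀ᶠ i in l, v i ∈ Icc p q := hv.eventually (Icc_mem_nhds hb.1 hb.2)
  have hφint : ∀ y ∈ Icc p q, ∀ z ∈ Icc p q, IntervalIntegrable φ volume y z :=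
    fun y hy z hz => (hφ.mono (uIcc_subset_Icc hy hz)).intervalIntegrable
  have hpq : p ≤ q := ha.1.le.trans ha.2.le
  set Φ : ℝ → E := fun y => ∫ x in p..y, φ x
  have hΦ : ContinuousOn Φ (Icc p q) := by
    have := intervalIntegral.continuousOn_primitive_interval (μ := volume)
      ((hφ.mono (uIcc_of_le hpq).subset).integrableOn_compact isCompact_uIcc)
    rwa [uIcc_of_le hpq] at this
  have hΦlim : ∀ {w : ι → ℝ} {c : ℝ}, c ∈ Ioo p q → Tendsto w l (𝓝 c) →
      Tendsto (fun i => Φ (w i)) l (𝓝 (Φ c)) := fun hc hw =>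
    ((hΦ.continuousAt (Icc_mem_nhds hc.1 hc.2)).tendsto).comp hw
  have hpmem : p ∈ Icc p q := left_mem_Icc.2 hpq
  have hφlim : Tendsto (fun i => ∫ x in u i..v i, φ x) l (𝓝 (∫ x in a..b, φ x)) := by
    rw [← intervalIntegral.integral_interval_sub_left (hφint p hpmem b (Ioo_subset_Icc_self hb))
      (hφint p hpmem a (Ioo_subset_Icc_self ha))]
    refine ((hΦlim hb hv).sub (hΦlim ha hu)).congr' ?_
    filter_upwards [hus, hvs] with i hui hvi
    exact intervalIntegral.integral_interval_sub_left (hφint p hpmem _ hvi) (hφint p hpmem _ hui)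
  have herr : Tendsto (fun i => ∫ x in u i..v i, ψ i x - φ x) l (𝓝 0) := by
    rw [Metric.tendsto_nhds]
    intro ε hε
    have hδ : 0 < ε / (q - p + 1) := div_pos hε (by linarith)
    filter_upwards [Metric.tendstoUniformlyOn_iff.1 hψ _ hδ, hus, hvs] with i hi hui hvi
    rw [dist_zero_right]
    calc ‖∫ x in u i..v i, ψ i x - φ x‖ ≤ ε / (q - p + 1) * |v i - u i| := by
          refine intervalIntegral.norm_integral_le_of_norm_le_const fun x hx => ?_
          rw [← dist_eq_norm, dist_comm]
          exact (hi x (uIcc_subset_Icc hui hvi (uIoc_subset_uIcc hx))).le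
      _ ≤ ε / (q - p + 1) * (q - p) := by
          gcongr
          exact abs_sub_le_iff.2 ⟨by linarith [hvi.2, hui.1], by linarith [hui.2, hvi.1]⟩
      _ < ε := by
          rw [div_mul_eq_mul_div, div_lt_iff₀ (by linarith)]
          nlinarith
  refine (by simpa using hφlim.add herr : Tendsto _ l _).congr' ?_
  filter_upwards [hψint, hus, hvs] with i hi hui hvi
  rw [intervalIntegral.integral_sub hi (hφint _ hui _ hvi)]
  abel

section StepFunction

variable {n : ℕ} (ξ : ℕ → ℝ)

theorem natFloor_mul_eq_of_mem_Ioo (hn : 0 < n) {j : ℕ} {x : ℝ}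
    (hx : x ∈ Ioo ((j : ℝ) / n) (((j + 1 : ℕ) : ℝ) / n)) : ⌊(n : ℝ) * x⌋₊ = j := by
  have hn' : (0 : ℝ) < n := Nat.cast_pos.2 hn
  obtain ⟨hjx, hxj⟩ := hx
  rw [div_lt_iff₀ hn'] at hjx
  rw [lt_div_iff₀ hn'] at hxj
  push_cast at hxj
  rw [Nat.floor_eq_iff (by nlinarith [j.cast_nonneg (α := ℝ)])]
  constructor <;> nlinarith

theorem intervalIntegrable_comp_natFloor_mul_step (hn : 0 < n) (j : ℕ) :
    IntervalIntegrable (fun x => ξ ⌊(n : ℝ) * x⌋₊) volume ((j : ℝ) / n)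
      (((j + 1 : ℕ) : ℝ) / n) := by
  have hle : (j : ℝ) / n ≤ ((j + 1 : ℕ) : ℝ) / n := by gcongr; simp
  rw [intervalIntegrable_iff_integrableOn_Ioo_of_le hle]
  exact (integrableOn_const (by simp)).congr_fun
    (fun x hx => (congrArg ξ (natFloor_mul_eq_of_mem_Ioo hn hx)).symm) measurableSet_Ioo

theorem integral_comp_natFloor_mul_step (hn : 0 < n) (j : ℕ) :
    ∫ x in (j : ℝ) / n..((j + 1 : ℕ) : ℝ) / n, ξ ⌊(n : ℝ) * x⌋₊ = ξ j / n := by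
  have hle : (j : ℝ) / n ≤ ((j + 1 : ℕ) : ℝ) / n := by gcongr; simp
  rw [intervalIntegral.integral_of_le hle, integral_Ioc_eq_integral_Ioo,
    setIntegral_congr_fun measurableSet_Ioo
      (fun x hx => congrArg ξ (natFloor_mul_eq_of_mem_Ioo hn hx)),
    setIntegral_const, Real.volume_real_Ioo_of_le hle, smul_eq_mul]
  push_cast
  field_simp
  ring

theorem intervalIntegrable_comp_natFloor_mul (hn : 0 < n) {m M : ℕ} (hmM : m ≤ M) :
    IntervalIntegrable (fun x => ξ ⌊(n : ℝ) * x⌋₊) volume ((m : ℝ) / n) ((M : ℝ) / n) :=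
  IntervalIntegrable.trans_iterate_Ico (a := fun k : ℕ => (k : ℝ) / n) hmM
    fun k _ => intervalIntegrable_comp_natFloor_mul_step ξ hn k

theorem integral_comp_natFloor_mul (hn : 0 < n) {m M : ℕ} (hmM : m ≤ M) :
    ∫ x in (m : ℝ) / n..(M : ℝ) / n, ξ ⌊(n : ℝ) * x⌋₊ = (∑ k ∈ Finset.Ico m M, ξ k) / n := by
  rw [Finset.sum_div, ← intervalIntegral.sum_integral_adjacent_intervals_Ico
    (a := fun k : ℕ => (k : ℝ) / n) hmM fun k _ => intervalIntegrable_comp_natFloor_mul_step ξ hn k]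
  exact Finset.sum_congr rfl fun k _ => integral_comp_natFloor_mul_step ξ hn k

end StepFunction

theorem sub_eq_sum_of_recurrence {F G H : ℕ → ℝ} {n m M : ℕ}
    (hrec : ∀ k, 1 ≤ k → k ≤ n → F k = G k + H k * F (k - 1)) (hmM : m ≤ M) (hMn : M ≤ n) :
    F M - F m = ∑ k ∈ Finset.Ioc m M, (G k - (1 - H k) * F (k - 1)) := by
  induction M, hmM using Nat.le_induction with
  | base => simp
  | succ M hmM ih =>
    rw [Finset.sum_Ioc_succ_top hmM, ← ih (by omega), hrec (M + 1) (by omega) hMn,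
      Nat.add_sub_cancel]
    ring

/-- On `[k/n, (k+1)/n)` this equals `n (F k - F (k - 1))` once `F` satisfies the recurrence. -/
noncomputable def recurrenceSlope (F G H : ℕ → ℝ) (n : ℕ) (x : ℝ) : ℝ :=
  n * G ⌊(n : ℝ) * x⌋₊ - n * (1 - H ⌊(n : ℝ) * x⌋₊) * F (⌊(n : ℝ) * x⌋₊ - 1)

theorem sub_eq_integral_recurrenceSlope {F G H : ℕ → ℝ} {n m M : ℕ} (hn : 0 < n)
    (hrec : ∀ k, 1 ≤ k → k ≤ n → F k = G k + H k * F (k - 1)) (hmM : m ≤ M) (hMn : M ≤ n) :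
    IntervalIntegrable (recurrenceSlope F G H n) volume (((m + 1 : ℕ) : ℝ) / n)
        (((M + 1 : ℕ) : ℝ) / n) ∧
      F M - F m =
        ∫ x in ((m + 1 : ℕ) : ℝ) / n..((M + 1 : ℕ) : ℝ) / n, recurrenceSlope F G H n x := by
  set ξ : ℕ → ℝ := fun k => n * G k - n * (1 - H k) * F (k - 1)
  have hmM' : m + 1 ≤ M + 1 := by omega
  refine ⟨intervalIntegrable_comp_natFloor_mul ξ hn hmM', ?_⟩
  rw [show (fun x => recurrenceSlope F G H n x) = fun x => ξ ⌊(n : ℝ) * x⌋₊ from rfl,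
    integral_comp_natFloor_mul ξ hn hmM', Finset.Ico_add_one_add_one_eq_Ioc, Finset.sum_div,
    sub_eq_sum_of_recurrence hrec hmM hMn]
  have hn' : (n : ℝ) ≠ 0 := by positivity
  refine Finset.sum_congr rfl fun k _ => ?_
  field_simp
  ring

theorem tendstoUniformlyOn_recurrenceSlope {F G H : ℕ → ℕ → ℝ} {f g h : ℝ → ℝ} {p q : ℝ}
    (hp : 0 < p) (hq : q ≤ 1)
    (hgconv : TendstoUniformlyOn (fun (n : ℕ) (x : ℝ) => (n : ℝ) * G n ⌊(n : ℝ) * x⌋₊) g atTop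
      (Icc p q))
    (hhconv : TendstoUniformlyOn (fun (n : ℕ) (x : ℝ) => (n : ℝ) * (1 - H n ⌊(n : ℝ) * x⌋₊)) h
      atTop (Icc p q))
    (hh : ContinuousOn h (Icc p q))
    (hfconv : TendstoUniformlyOn (fun (n : ℕ) (x : ℝ) => F n ⌊(n : ℝ) * x⌋₊) f atTop (Icc 0 1))
    (hf : ContinuousOn f (Icc 0 1)) :
    TendstoUniformlyOn (fun n => recurrenceSlope (F n) (G n) (H n) n) (fun x => g x - h x * f x)
      atTop (Icc p q) := by
  have hpq : Icc p q ⊆ Icc 0 1 := Icc_subset_Icc hp.le hq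
  have hshift : TendstoUniformlyOn (fun (n : ℕ) (x : ℝ) => F n (⌊(n : ℝ) * x⌋₊ - 1)) f atTop
      (Icc p q) := by
    refine (hfconv.comp_sub_of_uniformContinuousOn
      (isCompact_Icc.uniformContinuousOn_of_continuous hf) tendsto_one_div_atTop_nhds_zero_nat
      hpq ?_).congr ?_
    · filter_upwards [tendsto_one_div_atTop_nhds_zero_nat.eventually_lt_const hp] with n hn x hx
      have : (0 : ℝ) ≤ 1 / n := by positivity
      exact ⟨by linarith [hx.1], by linarith [hx.2]⟩
    · filter_upwards [eventually_ne_atTop 0] with n hn x _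
      dsimp only
      rw [mul_sub, mul_one_div_cancel (Nat.cast_ne_zero.2 hn), Nat.floor_sub_one]
  have hbound : ∀ {k : ℝ → ℝ}, ContinuousOn k (Icc p q) → ∃ C, ∀ x ∈ Icc p q, ‖k x‖ ≤ C :=
    fun hk => isCompact_Icc.exists_bound_of_continuousOn hk
  exact hgconv.fun_sub (hhconv.mul_of_bounded hshift (hbound hh) (hbound (hf.mono hpq)))

theorem tendsto_natFloor_mul_add_one_div {c : ℝ} (hc : 0 ≤ c) :
    Tendsto (fun n : ℕ => ((⌊(n : ℝ) * c⌋₊ + 1 : ℕ) : ℝ) / n) atTop (𝓝 c) := by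
  have hlim := ((tendsto_nat_floor_mul_div_atTop hc).comp tendsto_natCast_atTop_atTop).add
    tendsto_one_div_atTop_nhds_zero_nat
  rw [add_zero] at hlim
  refine hlim.congr fun n => ?_
  simp [mul_comm, add_div]

theorem sub_eq_integral_of_tendstoUniformlyOn_recurrenceSlope {F G H : ℕ → ℕ → ℝ}
    {f φ : ℝ → ℝ} {p q a b : ℝ}
    (hrec : ∀ n k, 1 ≤ k → k ≤ n → F n k = G n k + H n k * F n (k - 1))
    (hslope : TendstoUniformlyOn (fun n => recurrenceSlope (F n) (G n) (H n) n) φ atTop (Icc p q))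
    (hφ : ContinuousOn φ (Icc p q)) (ha : a ∈ Ioo p q) (hb : b ∈ Ioo p q) (ha0 : 0 ≤ a)
    (hab : a ≤ b) (hb1 : b ≤ 1)
    (hfa : Tendsto (fun n : ℕ => F n ⌊(n : ℝ) * a⌋₊) atTop (𝓝 (f a)))
    (hfb : Tendsto (fun n : ℕ => F n ⌊(n : ℝ) * b⌋₊) atTop (𝓝 (f b))) :
    f b - f a = ∫ x in a..b, φ x := by
  have hsteps : ∀ᶠ n : ℕ in atTop,
      IntervalIntegrable (recurrenceSlope (F n) (G n) (H n) n) volume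
          (((⌊(n : ℝ) * a⌋₊ + 1 : ℕ) : ℝ) / n) (((⌊(n : ℝ) * b⌋₊ + 1 : ℕ) : ℝ) / n) ∧
        F n ⌊(n : ℝ) * b⌋₊ - F n ⌊(n : ℝ) * a⌋₊ =
          ∫ x in ((⌊(n : ℝ) * a⌋₊ + 1 : ℕ) : ℝ) / n..((⌊(n : ℝ) * b⌋₊ + 1 : ℕ) : ℝ) / n,
            recurrenceSlope (F n) (G n) (H n) n x := by
    filter_upwards [eventually_gt_atTop 0] with n hn
    refine sub_eq_integral_recurrenceSlope hn (hrec n) (Nat.floor_le_floor (by gcongr)) ?_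
    exact Nat.floor_le_of_le (mul_le_of_le_one_right n.cast_nonneg hb1)
  refine tendsto_nhds_unique (hfb.sub hfa) ?_
  exact (tendsto_intervalIntegral_of_tendstoUniformlyOn hslope hφ ha hb
    (tendsto_natFloor_mul_add_one_div ha0) (tendsto_natFloor_mul_add_one_div (ha0.trans hab))
    (hsteps.mono fun _ hn => hn.1)).congr' (hsteps.mono fun _ hn => hn.2.symm)

theorem hasDerivAt_of_sub_eq_integral {E : Type*} [NormedAddCommGroup E] [NormedSpace ℝ E]
    [CompleteSpace E] {f φ : ℝ → E} {p q x : ℝ} (hφ : ContinuousOn φ (Ioo p q))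
    (hf : ∀ a ∈ Ioo p q, ∀ b ∈ Ioo p q, a ≤ b → f b - f a = ∫ t in a..b, φ t)
    (hx : x ∈ Ioo p q) :
    HasDerivAt f (φ x) x := by
  have hnhds : Ioo p q ∈ 𝓝 x := isOpen_Ioo.mem_nhds hx
  have hprim : HasDerivAt (fun y => f x + ∫ t in x..y, φ t) (φ x) x :=
    (intervalIntegral.integral_hasDerivAt_right IntervalIntegrable.refl
      (hφ.stronglyMeasurableAtFilter isOpen_Ioo x hx) (hφ.continuousAt hnhds)).const_add (f x)
  refine hprim.congr_of_eventuallyEq ?_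
  filter_upwards [hnhds] with y hy
  rcases le_total x y with hxy | hyx
  · rw [← hf x hx y hy hxy]
    abel
  · rw [intervalIntegral.integral_symm, ← hf y hy x hx hyx]
    abel

theorem stmt_12
    (F G H : ℕ → ℕ → ℝ) (μ : ℝ) (f g h : ℝ → ℝ)
    (hrec : ∀ n : ℕ, ∀ k, 1 ≤ k → k ≤ n → F n k = G n k + H n k * F n (k - 1))
    (hterm : ∀ n : ℕ, F n 0 = μ)
    (hgconv : ∀ ε ε' : ℝ, 0 < ε → ε < ε' → ε' < 1 →
      TendstoUniformlyOn (fun (n : ℕ) (x : ℝ) => (n : ℝ) * G n ⌊(n : ℝ) * x⌋₊) g atTop (Set.Icc ε ε'))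
    (hhconv : ∀ ε ε' : ℝ, 0 < ε → ε < ε' → ε' < 1 →
      TendstoUniformlyOn (fun (n : ℕ) (x : ℝ) => (n : ℝ) * (1 - H n ⌊(n : ℝ) * x⌋₊)) h atTop
        (Set.Icc ε ε'))
    (hg : ContinuousOn g (Set.Ioo 0 1)) (hh : ContinuousOn h (Set.Ioo 0 1))
    (hfconv : TendstoUniformlyOn (fun (n : ℕ) (x : ℝ) => F n ⌊(n : ℝ) * x⌋₊) f atTop (Set.Icc 0 1))
    (hf : ContinuousOn f (Set.Icc 0 1)) :
    f 0 = μ ∧ ∀ x ∈ Set.Ioo (0 : ℝ) 1, HasDerivAt f (-(f x * h x) + g x) x := by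
  have hf0 : f 0 = μ :=
    tendsto_nhds_unique (hfconv.tendsto_at ⟨le_rfl, zero_le_one⟩) (by simp [hterm])
  have hφ : ContinuousOn (fun x => g x - h x * f x) (Ioo 0 1) :=
    hg.sub (hh.mul (hf.mono Ioo_subset_Icc_self))
  refine ⟨hf0, fun x hx => ?_⟩
  suffices hintegral : ∀ a ∈ Ioo (0 : ℝ) 1, ∀ b ∈ Ioo (0 : ℝ) 1, a ≤ b →
      f b - f a = ∫ t in a..b, g t - h t * f t by
    exact (hasDerivAt_of_sub_eq_integral hφ hintegral hx).congr_deriv (by ring)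
  intro a ha b hb hab
  have hp : 0 < a / 2 := by linarith [ha.1]
  have hpq : a / 2 < (1 + b) / 2 := by linarith [hb.2]
  have hq : (1 + b) / 2 < 1 := by linarith [hb.2]
  have hsub : Icc (a / 2) ((1 + b) / 2) ⊆ Ioo 0 1 := Icc_subset_Ioo hp hq
  refine sub_eq_integral_of_tendstoUniformlyOn_recurrenceSlope hrec
    (tendstoUniformlyOn_recurrenceSlope hp hq.le (hgconv _ _ hp hpq hq) (hhconv _ _ hp hpq hq)
      (hh.mono hsub) hfconv hf) (hφ.mono hsub) ⟨by linarith, by linarith [hb.2]⟩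
    ⟨by linarith, by linarith [hb.2]⟩ ha.1.le hab hb.2.le
    (hfconv.tendsto_at (Ioo_subset_Icc_self ha)) (hfconv.tendsto_at (Ioo_subset_Icc_self hb))
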